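/- With H = FreeAlgebra k ℕ+ and Δ, ε, δ_ℓ as in the context: give the generator a_n weight n, so that H is graded with the monomial a_{i_1}⋯a_{i_r} having weight i_1+⋯+i_r. If a ∈ H is homogeneous of weight N (i.e. a lies in the k-span of monomials a_{i_1}⋯a_{i_r} with i_1+⋯+i_r = N), then δ_ℓ(a) = 0 for every integer ℓ > N. -/

import Mathlib

open scoped TensorProduct
noncomputable section

universe u
variable (k : Type u) [Field k] [CharZero k]

/-- `H = FreeAlgebra k ℕ+`, the free associative `k`-algebra on `a_1, a_2, a_3, …`. -/
abbrev HA := FreeAlgebra k ℕ+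

/-- The generator `a_n` for `n : ℕ+`. -/
def ag (n : ℕ+) : HA k := FreeAlgebra.ι k n

/-- The generator `a_n` for `n : ℕ` with `n ≥ 1` (and `1` for `n = 0`, never used). -/
def ag' (n : ℕ) : HA k := if h : 0 < n then ag k ⟨n, h⟩ else 1

/-- `P_t^{(s)}(a_*) := Σ_{j_1+⋯+j_s = t, j_i ≥ 1} a_{j_1}⋯a_{j_s}`. -/
def Pha (t s : ℕ) : HA k :=
  ∑ c ∈ Finset.univ.filter (fun c : Composition t => c.length = s),
    (c.blocks.map (ag' k)).prod

/-- `Q_t^ℓ(a_*) := Σ_{s=1}^{t} binom(ℓ+1, s)·P_t^{(s)}(a_*)`. -/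
def Qha (t l : ℕ) : HA k := ∑ s ∈ Finset.Icc 1 t, (l + 1).choose s • Pha k t s

/-- The coproduct `Δ : H → H ⊗ H`, the unique `k`-algebra homomorphism with
`Δ(a_n) = a_n⊗1 + 1⊗a_n + Σ_{m=1}^{n−1} a_m ⊗ Q^m_{n−m}(a_*)`. -/
def Dha : HA k →ₐ[k] (HA k ⊗[k] HA k) :=
  FreeAlgebra.lift k fun n : ℕ+ =>
    ag k n ⊗ₜ[k] 1 + 1 ⊗ₜ[k] ag k n +
      ∑ m ∈ Finset.Icc 1 ((n : ℕ) - 1), ag' k m ⊗ₜ[k] Qha k ((n : ℕ) - m) m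

/-- The counit `ε : H → k`, the `k`-algebra homomorphism with `ε(a_n) = 0`. -/
def Eha : HA k →ₐ[k] k := FreeAlgebra.lift k fun _ : ℕ+ => 0

/-- The `n`-fold tensor power `H^{⊗n}` over `k` (with `H^{⊗0} = k`). -/
def TpowH : ℕ → ModuleCat k
  | 0 => ModuleCat.of k k
  | n+1 => ModuleCat.of k (HA k ⊗[k] (TpowH n))

/-- The iterated coproducts `Δ^n : H → H^{⊗n}`, with `Δ^0 := ε`. -/
def DeltaH : (n : ℕ) → (HA k →ₗ[k] TpowH k n)
  | 0 => (Eha k).toLinearMap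
  | n+1 => (TensorProduct.map LinearMap.id (DeltaH n)) ∘ₗ (Dha k).toLinearMap

/-- `id - u ∘ ε : H → H`. -/
def projH : HA k →ₗ[k] HA k :=
  LinearMap.id - (Algebra.linearMap k (HA k)) ∘ₗ (Eha k).toLinearMap

/-- `(id - u∘ε)^{⊗n}`. -/
def projPowH : (n : ℕ) → (TpowH k n →ₗ[k] TpowH k n)
  | 0 => LinearMap.id
  | n+1 => TensorProduct.map (projH k) (projPowH n)

/-- Drinfeld's maps `δ_n := (id - u∘ε)^{⊗n} ∘ Δ^n : H → H^{⊗n}` (`δ_0 = ε`). -/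
def deltaH (n : ℕ) : HA k →ₗ[k] TpowH k n := projPowH k n ∘ₗ DeltaH k n

/-- The set of monomials `a_{i_1}⋯a_{i_r}` of weight `i_1 + ⋯ + i_r = N`. -/
def monomialsOfWeight (N : ℕ) : Set (HA k) :=
  { z | ∃ L : List ℕ+, (L.map fun i : ℕ+ => (i : ℕ)).sum = N ∧ z = (L.map (ag k)).prod }


set_option linter.unusedSectionVars false

namespace Stmt11Aux
open scoped Pointwise

/-- The span of the monomials of weight `N`. -/
def W (N : ℕ) : Submodule k (HA k) := Submodule.span k (monomialsOfWeight k N)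

lemma one_mem_mono0 : (1 : HA k) ∈ monomialsOfWeight k 0 := ⟨[], by simp, by simp⟩

lemma eq_one_of_mem_mono0 {x : HA k} (hx : x ∈ monomialsOfWeight k 0) : x = 1 := by
  obtain ⟨L, hL, rfl⟩ := hx
  cases L with
  | nil => simp
  | cons a L => simp [Nat.add_eq_zero] at hL

lemma mono_mul {p q : ℕ} {x y : HA k} (hx : x ∈ monomialsOfWeight k p)
    (hy : y ∈ monomialsOfWeight k q) : x * y ∈ monomialsOfWeight k (p + q) := by
  obtain ⟨L, hL, rfl⟩ := hx; obtain ⟨M, hM, rfl⟩ := hy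
  exact ⟨L ++ M, by simp [hL, hM], by simp⟩

lemma pmapMk_map_coe (l : List ℕ) (H : ∀ a ∈ l, 0 < a) :
    ((l.pmap (fun a h => (⟨a, h⟩ : ℕ+)) H).map fun i : ℕ+ => (i : ℕ)) = l := by
  induction l with
  | nil => rfl
  | cons a l ih => simp only [List.pmap_cons, List.map_cons, PNat.mk_ofNat, List.cons.injEq]
                   exact congrArg₂ List.cons rfl (ih _)

lemma pmapMk_map_ag (l : List ℕ) (H : ∀ a ∈ l, 0 < a) :
    ((l.pmap (fun a h => (⟨a, h⟩ : ℕ+)) H).map (ag k)) = l.map (ag' k) := by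
  induction l with
  | nil => rfl
  | cons a l ih =>
    simp only [List.pmap_cons, List.map_cons, List.cons.injEq]
    exact congrArg₂ List.cons (show ag k ⟨a, H a (by simp)⟩ = ag' k a by rw [ag', dif_pos (H a (by simp))]) (ih _)

lemma Pha_mem (t s : ℕ) : Pha k t s ∈ W k t := by
  refine Submodule.sum_mem _ fun c _ => Submodule.subset_span ?_
  refine ⟨c.blocks.pmap (fun m h => (⟨m, h⟩ : ℕ+)) (fun m hm => c.one_le_blocks hm), ?_, ?_⟩
  · erw [pmapMk_map_coe]; exact c.blocks_sum
  · erw [pmapMk_map_ag]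

lemma Qha_mem (t l : ℕ) : Qha k t l ∈ W k t :=
  Submodule.sum_mem _ fun s _ => nsmul_mem (Pha_mem k t s) _

/-- Pure tensors `x ⊗ y` with `x` of weight `p`, `y` of weight `q`, `p + q = N`. -/
def keySet (N : ℕ) : Set (HA k ⊗[k] HA k) :=
  {z | ∃ p q : ℕ, p + q = N ∧ ∃ x ∈ monomialsOfWeight k p, ∃ y ∈ monomialsOfWeight k q,
    z = x ⊗ₜ[k] y}

def keyS (N : ℕ) : Submodule k (HA k ⊗[k] HA k) := Submodule.span k (keySet k N)

lemma tmul_mem_keyS {p q : ℕ} {x y : HA k} (hx : x ∈ monomialsOfWeight k p) (hy : y ∈ W k q) :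
    x ⊗ₜ[k] y ∈ keyS k (p + q) := by
  induction hy using Submodule.span_induction with
  | mem y hy => exact Submodule.subset_span ⟨p, q, rfl, x, hx, y, hy, rfl⟩
  | zero => rw [TensorProduct.tmul_zero]; exact Submodule.zero_mem _
  | add y z _ _ hy hz => rw [TensorProduct.tmul_add]; exact Submodule.add_mem _ hy hz
  | smul c y _ hy => rw [TensorProduct.tmul_smul]; exact Submodule.smul_mem _ c hy

lemma mul_mem_keyS {p q : ℕ} {x y : HA k ⊗[k] HA k} (hx : x ∈ keyS k p) (hy : y ∈ keyS k q) :
    x * y ∈ keyS k (p + q) := by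
  have h := Submodule.mul_mem_mul hx hy
  rw [keyS, keyS, Submodule.span_mul_span] at h
  have hs : keySet k p * keySet k q ⊆ keySet k (p + q) := by
    rintro z ⟨a, ha, b, hb, rfl⟩
    obtain ⟨p1, q1, hpq1, x1, hx1, y1, hy1, rfl⟩ := ha
    obtain ⟨p2, q2, hpq2, x2, hx2, y2, hy2, rfl⟩ := hb
    show (x1 ⊗ₜ[k] y1) * (x2 ⊗ₜ[k] y2) ∈ keySet k (p + q)
    rw [Algebra.TensorProduct.tmul_mul_tmul]
    exact ⟨p1 + p2, q1 + q2, by omega, _, mono_mul k hx1 hx2, _, mono_mul k hy1 hy2, rfl⟩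
  exact Submodule.span_mono hs h

lemma ag_mem_mono (n : ℕ+) : ag k n ∈ monomialsOfWeight k (n : ℕ) :=
  ⟨[n], by simp, by simp⟩

lemma ag'_mem_mono {m : ℕ} (hm : 0 < m) : ag' k m ∈ monomialsOfWeight k m := by
  rw [ag', dif_pos hm]; exact ag_mem_mono k ⟨m, hm⟩

lemma Dha_ag_mem (n : ℕ+) : Dha k (ag k n) ∈ keyS k (n : ℕ) := by
  rw [Dha, ag, FreeAlgebra.lift_ι_apply]
  refine Submodule.add_mem _ (Submodule.add_mem _ ?_ ?_) ?_
  · have := tmul_mem_keyS k (ag_mem_mono k n)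
      (Submodule.subset_span (one_mem_mono0 k) : (1 : HA k) ∈ W k 0)
    simpa [ag] using this
  · have := tmul_mem_keyS k (one_mem_mono0 k)
      (Submodule.subset_span (ag_mem_mono k n) : ag k n ∈ W k (n : ℕ))
    simpa [ag] using this
  · refine Submodule.sum_mem _ fun m hm => ?_
    simp only [Finset.mem_Icc] at hm
    have h1 : 0 < m := hm.1
    have h2 : m + ((n : ℕ) - m) = (n : ℕ) := by have := n.pos; omega
    have := tmul_mem_keyS k (ag'_mem_mono k h1) (Qha_mem k ((n : ℕ) - m) m)
    rwa [h2] at this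

lemma Dha_mono_mem (L : List ℕ+) :
    Dha k ((L.map (ag k)).prod) ∈ keyS k ((L.map fun i : ℕ+ => (i : ℕ)).sum) := by
  induction L with
  | nil =>
    simp only [List.map_nil, List.prod_nil, List.sum_nil, map_one]
    exact Submodule.subset_span ⟨0, 0, rfl, 1, one_mem_mono0 k, 1, one_mem_mono0 k,
      Algebra.TensorProduct.one_def⟩
  | cons n L ih =>
    simp only [List.map_cons, List.prod_cons, List.sum_cons, map_mul]
    exact mul_mem_keyS k (Dha_ag_mem k n) ih

lemma Dha_mem {N : ℕ} {a : HA k} (ha : a ∈ W k N) : Dha k a ∈ keyS k N := by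
  induction ha using Submodule.span_induction with
  | mem a ha => obtain ⟨L, hL, rfl⟩ := ha; rw [← hL]; exact Dha_mono_mem k L
  | zero => rw [map_zero]; exact Submodule.zero_mem _
  | add a b _ _ h1 h2 => rw [map_add]; exact Submodule.add_mem _ h1 h2
  | smul c a _ h => rw [map_smul]; exact Submodule.smul_mem _ c h

lemma projH_one : projH k (1 : HA k) = 0 := by
  simp [projH]

lemma deltaH_vanish : ∀ (l N : ℕ), N < l → ∀ a ∈ W k N, deltaH k l a = 0 := by
  intro l
  induction l with
  | zero => omega
  | succ l ih =>
    intro N hN a ha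
    have hk : Dha k a ∈ keyS k N := Dha_mem k ha
    have key0 : ∀ z, z ∈ keyS k N → (TensorProduct.map (projH k) (projPowH k l))
        ((TensorProduct.map LinearMap.id (DeltaH k l)) z) = 0 := by
      intro z hz
      induction hz using Submodule.span_induction with
      | mem z hz =>
        obtain ⟨p, q, hpq, x, hx, y, hy, rfl⟩ := hz
        rw [TensorProduct.map_tmul, TensorProduct.map_tmul]
        simp only [LinearMap.id_coe, id_eq]
        rcases Nat.eq_zero_or_pos p with hp | hp
        · subst hp
          rw [eq_one_of_mem_mono0 k hx, projH_one, TensorProduct.zero_tmul]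
        · have hdy : projPowH k l ((DeltaH k l) y) = 0 :=
            ih q (by omega) y (Submodule.subset_span hy)
          rw [hdy, TensorProduct.tmul_zero]
      | zero => rw [map_zero, map_zero]
      | add u v _ _ h1 h2 => rw [map_add, map_add, h1, h2, add_zero]
      | smul c u _ h => rw [map_smul, map_smul, h, smul_zero]
    exact key0 _ hk

end Stmt11Aux

/-- Give the generator `a_n` weight `n`.  If `a ∈ H` is homogeneous
of weight `N` (i.e. `a` lies in the `k`-span of the monomials `a_{i_1}⋯a_{i_r}` with
`i_1+⋯+i_r = N`), then `δ_ℓ(a) = 0` for every `ℓ > N`. -/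
theorem stmt11 (N : ℕ) (a : HA k) (ha : a ∈ Submodule.span k (monomialsOfWeight k N))
    (l : ℕ) (hl : N < l) : deltaH k l a = 0 :=
  Stmt11Aux.deltaH_vanish k l N hl a ha
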